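/- arXiv:2104.02912 — 5 statements merged into one kernel-verified Lean document; each statement's English description precedes it below -/
import Mathlib

section
/- Let p ∈ (0,1), r > 0, and x ∈ ℝⁿ with ‖x‖_p^p ≤ r (where ‖x‖_p^p = ∑ᵢ |xᵢ|^p). If y ∈ ℝⁿ satisfies yᵢ = 0 for all i with xᵢ = 0, and ∑_{i : xᵢ ≠ 0} |xᵢ|^(p-1) |yᵢ| ≤ r / p + ((p-1)/p) ∑_{i : xᵢ ≠ 0} |xᵢ|^p, then ‖y‖_p^p ≤ r. In particular, the weighted ℓ₁-ball subproblem (𝒫₁) produces feasible iterates. -/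
open Finset

lemma key_tangent {a b p : ℝ} (ha : 0 < a) (hb : 0 ≤ b) (hp0 : 0 < p) (hp1 : p ≤ 1) :
    b ^ p ≤ a ^ p + p * a ^ (p - 1) * (b - a) := by
  have hba : 0 ≤ b / a := div_nonneg hb ha.le
  have hs : (-1 : ℝ) ≤ b / a - 1 := by linarith
  have h := rpow_one_add_le_one_add_mul_self hs hp0.le hp1
  rw [add_sub_cancel] at h
  have hmul := mul_le_mul_of_nonneg_left h (Real.rpow_nonneg ha.le p)
  have h1 : a ^ p * (b / a) ^ p = b ^ p := by
    rw [← Real.mul_rpow ha.le hba]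
    congr 1
    field_simp
  have h3 : a ^ (p - 1) * a = a ^ p := by
    rw [Real.rpow_sub_one ha.ne']
    field_simp
  have h2 : a ^ p * (b / a) = a ^ (p - 1) * b := by
    rw [← h3]; field_simp
  nlinarith [hmul]

theorem sub1_feasible (n : ℕ) (p r : ℝ) (hp0 : 0 < p) (hp1 : p < 1) (hr : 0 < r)
    (x y : Fin n → ℝ)
    (hx : ∑ i, |x i| ^ p ≤ r)
    (hy0 : ∀ i, x i = 0 → y i = 0)
    (hy : ∑ i ∈ Finset.univ.filter (fun i => x i ≠ 0), |x i| ^ (p - 1) * |y i|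
          ≤ r / p + ((p - 1) / p) * ∑ i ∈ Finset.univ.filter (fun i => x i ≠ 0), |x i| ^ p) :
    ∑ i, |y i| ^ p ≤ r := by
  set I := Finset.univ.filter (fun i : Fin n => x i ≠ 0) with hI
  have hsum : ∑ i, |y i| ^ p = ∑ i ∈ I, |y i| ^ p := by
    rw [← Finset.sum_filter_add_sum_filter_not Finset.univ (fun i => x i ≠ 0)]
    have : ∑ i ∈ Finset.univ.filter (fun i => ¬ x i ≠ 0), |y i| ^ p = 0 := by
      apply Finset.sum_eq_zero
      intro i hi
      simp only [Finset.mem_filter, not_not] at hi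
      rw [hy0 i hi.2, abs_zero, Real.zero_rpow hp0.ne']
    rw [this, add_zero]
  have hxsum : ∑ i ∈ I, |x i| ^ p ≤ r := by
    refine le_trans ?_ hx
    apply Finset.sum_le_sum_of_subset_of_nonneg (Finset.filter_subset _ _)
    intro i _ _
    exact Real.rpow_nonneg (abs_nonneg _) p
  set S := ∑ i ∈ I, |x i| ^ p with hS
  set T := ∑ i ∈ I, |x i| ^ (p - 1) * |y i| with hT
  have hstep : ∑ i ∈ I, |y i| ^ p ≤ S + p * T - p * S := by
    have hb : ∑ i ∈ I, |y i| ^ p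
        ≤ ∑ i ∈ I, (|x i| ^ p + p * |x i| ^ (p - 1) * (|y i| - |x i|)) := by
      apply Finset.sum_le_sum
      intro i hi
      simp only [hI, Finset.mem_filter] at hi
      exact key_tangent (abs_pos.mpr hi.2) (abs_nonneg _) hp0 hp1.le
    calc ∑ i ∈ I, |y i| ^ p
        ≤ ∑ i ∈ I, (|x i| ^ p + p * |x i| ^ (p - 1) * (|y i| - |x i|)) := hb
      _ = S + p * T - p * ∑ i ∈ I, |x i| ^ (p - 1) * |x i| := by
          rw [hS, hT, Finset.mul_sum, Finset.mul_sum]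
          rw [← Finset.sum_add_distrib, ← Finset.sum_sub_distrib]
          apply Finset.sum_congr rfl
          intro i _
          ring
      _ = S + p * T - p * S := by
          congr 1
          rw [hS]
          congr 1
          apply Finset.sum_congr rfl
          intro i hi
          simp only [hI, Finset.mem_filter] at hi
          rw [Real.rpow_sub_one (abs_ne_zero.mpr hi.2)]
          exact div_mul_cancel₀ _ (abs_ne_zero.mpr hi.2)
  have hpT : p * T ≤ r + (p - 1) * S := by
    have := mul_le_mul_of_nonneg_left hy hp0.le
    calc p * T ≤ p * (r / p + (p - 1) / p * S) := this
      _ = r + (p - 1) * S := by field_simp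
  rw [hsum]
  calc ∑ i ∈ I, |y i| ^ p ≤ S + p * T - p * S := hstep
    _ ≤ S + (r + (p - 1) * S) - p * S := by linarith
    _ = r := by ring
end

section
/- Let p ∈ (0,1), r > 0, c ∈ (0,1), and x ∈ ℝⁿ with ‖x‖_p^p < r. Define ε := c ((r - ‖x‖_p^p)/(|A(x)|+1))^(1/p) and r' := (1/p)(r + (p-1)‖x‖_p^p - |A(x)| ε^p). If y ∈ ℝⁿ satisfies ∑_{i∈I(x)} |xᵢ|^(p-1)|yᵢ| + ∑_{i∈A(x)} ε^(p-1)|yᵢ| ≤ r', then ‖y‖_p^p ≤ r. That is, the weighted ℓ₁ ball constructed from an interior point is contained in the ℓ_p ball. -/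
open Finset

lemma tangent_rpow_aux {a t p : ℝ} (ha : 0 < a) (ht : 0 ≤ t) (hp0 : 0 < p) (hp1 : p ≤ 1) :
    t ^ p ≤ a ^ p + p * a ^ (p - 1) * (t - a) := by
  have hs : (-1 : ℝ) ≤ t / a - 1 := by
    have : 0 ≤ t / a := div_nonneg ht ha.le
    linarith
  have h := rpow_one_add_le_one_add_mul_self hs hp0.le hp1
  rw [add_sub_cancel] at h
  have hap : (0:ℝ) < a ^ p := Real.rpow_pos_of_pos ha _
  have hdiv : (t / a) ^ p = t ^ p / a ^ p := Real.div_rpow ht ha.le p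
  rw [hdiv, div_le_iff₀ hap] at h
  have hsub : a ^ (p - 1) = a ^ p / a := by
    rw [Real.rpow_sub ha, Real.rpow_one]
  rw [hsub]
  have := h
  calc t ^ p ≤ (1 + p * (t / a - 1)) * a ^ p := this
    _ = a ^ p + p * (a ^ p / a) * (t - a) := by
        field_simp

theorem weighted_l1_ball_subset_lp_ball (n : ℕ) (p r c : ℝ)
    (hp0 : 0 < p) (hp1 : p < 1) (hr : 0 < r) (hc0 : 0 < c) (hc1 : c < 1)
    (x : Fin n → ℝ) (hx : ∑ i, |x i| ^ p < r)
    (A : ℕ) (hA : A = (Finset.univ.filter (fun i => x i = 0)).card)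
    (ε : ℝ) (hε : ε = c * ((r - ∑ i, |x i| ^ p) / (A + 1)) ^ (1 / p))
    (r' : ℝ) (hr' : r' = (1 / p) * (r + (p - 1) * (∑ i, |x i| ^ p) - A * ε ^ p))
    (y : Fin n → ℝ)
    (hy : ∑ i ∈ Finset.univ.filter (fun i => x i ≠ 0), |x i| ^ (p - 1) * |y i|
          + ∑ i ∈ Finset.univ.filter (fun i => x i = 0), ε ^ (p - 1) * |y i| ≤ r') :
    ∑ i, |y i| ^ p ≤ r := by
  set S := ∑ i, |x i| ^ p with hS
  have hεpos : 0 < ε := by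
    rw [hε]
    apply mul_pos hc0
    apply Real.rpow_pos_of_pos
    apply div_pos (by linarith)
    positivity
  set I := Finset.univ.filter (fun i : Fin n => x i ≠ 0) with hI
  set Af := Finset.univ.filter (fun i : Fin n => x i = 0) with hAf
  have hsplit : ∀ f : Fin n → ℝ, ∑ i, f i = ∑ i ∈ I, f i + ∑ i ∈ Af, f i := by
    intro f
    have h := Finset.sum_filter_add_sum_filter_not Finset.univ (fun i => x i ≠ 0) f
    simp only [ne_eq, not_not] at h
    rw [hI, hAf, ← h]
  -- sum over I of |x|^p equals S
  have hSI : ∑ i ∈ I, |x i| ^ p = S := by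
    rw [hS, hsplit]
    have : ∑ i ∈ Af, |x i| ^ p = 0 := by
      apply Finset.sum_eq_zero
      intro i hi
      rw [hAf, Finset.mem_filter] at hi
      rw [hi.2]
      simp [Real.zero_rpow hp0.ne']
    rw [this, add_zero]
  -- pointwise bounds
  have hIbound : ∀ i ∈ I, |y i| ^ p ≤ |x i| ^ p + p * (|x i| ^ (p - 1) * |y i|) - p * |x i| ^ p := by
    intro i hi
    rw [hI, Finset.mem_filter] at hi
    have hxi : 0 < |x i| := abs_pos.mpr hi.2
    have := tangent_rpow_aux hxi (abs_nonneg (y i)) hp0 hp1.le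
    have hxp : |x i| ^ (p - 1) * |x i| = |x i| ^ p := by
      rw [← Real.rpow_add_one hxi.ne']
      ring_nf
    nlinarith [this]
  have hAbound : ∀ i ∈ Af, |y i| ^ p ≤ ε ^ p + p * (ε ^ (p - 1) * |y i|) := by
    intro i _
    have := tangent_rpow_aux hεpos (abs_nonneg (y i)) hp0 hp1.le
    have hεp : ε ^ (p - 1) * ε = ε ^ p := by
      rw [← Real.rpow_add_one hεpos.ne']
      ring_nf
    nlinarith [this, mul_pos hp0 (Real.rpow_pos_of_pos hεpos p)]
  have hcard : (Af.card : ℝ) = A := by rw [hA, hAf]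
  calc ∑ i, |y i| ^ p
      = ∑ i ∈ I, |y i| ^ p + ∑ i ∈ Af, |y i| ^ p := hsplit _
    _ ≤ (∑ i ∈ I, (|x i| ^ p + p * (|x i| ^ (p - 1) * |y i|) - p * |x i| ^ p))
        + ∑ i ∈ Af, (ε ^ p + p * (ε ^ (p - 1) * |y i|)) := by
        gcongr ?_ + ?_
        · exact Finset.sum_le_sum hIbound
        · exact Finset.sum_le_sum hAbound
    _ = S - p * S + A * ε ^ p
        + p * (∑ i ∈ I, |x i| ^ (p - 1) * |y i| + ∑ i ∈ Af, ε ^ (p - 1) * |y i|) := by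
        rw [Finset.sum_sub_distrib, Finset.sum_add_distrib, Finset.sum_add_distrib,
          ← Finset.mul_sum, ← Finset.mul_sum, ← Finset.mul_sum, hSI,
          Finset.sum_const, nsmul_eq_mul, hcard]
        ring
    _ ≤ S - p * S + A * ε ^ p + p * r' := by
        gcongr
    _ = r := by
        rw [hr']
        field_simp
        ring
end

section
/- Let Ω = {x ∈ ℝⁿ : ∑ᵢ |xᵢ|^p ≤ r} with p ∈ (0,1), r > 0, and let x̄ ∈ Ω satisfy ‖x̄‖_p^p = r. Then any vector η ∈ ℝⁿ with ηᵢ = p|x̄ᵢ|^(p-1) sgn(x̄ᵢ) for all i in the support of x̄ (and ηᵢ arbitrary for i with x̄ᵢ = 0) belongs to the Fréchet normal cone N_Ω(x̄). -/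
/-! Near a coordinate `a ≠ 0`, the function `b ↦ |b| ^ p` lies above its tangent line at `a` up
to a quadratic error `C (b - a) ^ 2`; near `a = 0`, `|b| ^ p` dominates every linear function
`c b`, because `|b| ^ (p - 1) → ∞`. Summing these coordinate estimates and using
`∑ |xᵢ| ^ p ≤ r = ∑ |x̄ᵢ| ^ p` gives `⟪η, x - x̄⟫ ≤ C ‖x - x̄‖ ^ 2` for `x ∈ Ω` near `x̄`. -/

open Finset

/-- The Fréchet normal cone of a set `X` at a point `x₀`:
all `η` with `limsup_{x → x₀, x ∈ X} ⟪η, x - x₀⟫ / ‖x - x₀‖ ≤ 0`. -/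
def frechetNormalCone {n : ℕ} (X : Set (EuclideanSpace ℝ (Fin n)))
    (x₀ : EuclideanSpace ℝ (Fin n)) : Set (EuclideanSpace ℝ (Fin n)) :=
  {η | ∀ ε > 0, ∃ δ > 0, ∀ x ∈ X, ‖x - x₀‖ < δ →
      (inner ℝ η (x - x₀) : ℝ) ≤ ε * ‖x - x₀‖}

open Filter Topology

lemma mem_frechetNormalCone_of_eventually_inner_le_mul_norm_sq {n : ℕ}
    {X : Set (EuclideanSpace ℝ (Fin n))} {x₀ η : EuclideanSpace ℝ (Fin n)} {C : ℝ}
    (h : ∀ᶠ x in 𝓝[X] x₀, inner ℝ η (x - x₀) ≤ C * ‖x - x₀‖ ^ 2) :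
    η ∈ frechetNormalCone X x₀ := by
  intro ε hε
  have hsmall : ∀ᶠ x in 𝓝 x₀, C * ‖x - x₀‖ < ε := by
    have : Tendsto (fun x => C * ‖x - x₀‖) (𝓝 x₀) (𝓝 (C * ‖x₀ - x₀‖)) :=
      (by fun_prop : Continuous fun x => C * ‖x - x₀‖).tendsto x₀
    rw [sub_self, norm_zero, mul_zero] at this
    exact this.eventually_lt_const hε
  obtain ⟨δ, hδ, hball⟩ := Metric.eventually_nhds_iff.mp
    ((eventually_nhdsWithin_iff.mp h).and hsmall)
  refine ⟨δ, hδ, fun x hx hxδ => ?_⟩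
  obtain ⟨hquad, hlt⟩ := hball (by rwa [dist_eq_norm])
  calc inner ℝ η (x - x₀) ≤ (C * ‖x - x₀‖) * ‖x - x₀‖ := by linarith [hquad hx]
    _ ≤ ε * ‖x - x₀‖ := by gcongr

lemma one_add_mul_sub_sub_mul_sq_le_rpow {p t : ℝ} (hp0 : 0 ≤ p) (hp1 : p ≤ 1) (ht : 0 < t) :
    1 + p * (t - 1) - (1 - p) * (t - 1) ^ 2 ≤ t ^ p := by
  have hbernoulli : t ^ (1 - p) ≤ 1 + (1 - p) * (t - 1) := by
    simpa using rpow_one_add_le_one_add_mul_self (s := t - 1) (by linarith) (by linarith)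
      (by linarith)
  have hsplit : t ^ p * t ^ (1 - p) = t := by
    rw [← Real.rpow_add ht]; simp
  have : t ≤ t ^ p * (1 + (1 - p) * (t - 1)) :=
    calc t = t ^ p * t ^ (1 - p) := hsplit.symm
      _ ≤ t ^ p * (1 + (1 - p) * (t - 1)) := by gcongr
  nlinarith [mul_nonneg (mul_nonneg (sq_nonneg (1 - p)) (sq_nonneg (t - 1))) ht.le,
    Real.rpow_pos_of_pos ht p]

lemma mul_rpow_sub_one_mul_sub_le {p A B : ℝ} (hp0 : 0 ≤ p) (hp1 : p ≤ 1) (hA : 0 < A)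
    (hB : 0 < B) :
    p * A ^ (p - 1) * (B - A) ≤ B ^ p - A ^ p + (1 - p) * A ^ (p - 2) * (B - A) ^ 2 := by
  have h := mul_le_mul_of_nonneg_left
    (one_add_mul_sub_sub_mul_sq_le_rpow hp0 hp1 (div_pos hB hA)) (Real.rpow_pos_of_pos hA p).le
  rw [Real.div_rpow hB.le hA.le] at h
  rw [Real.rpow_sub hA, Real.rpow_sub hA, Real.rpow_one, Real.rpow_two]
  have hAp : 0 < A ^ p := Real.rpow_pos_of_pos hA p
  field_simp at h ⊢
  nlinarith [h]

lemma eventually_mul_le_abs_rpow {p : ℝ} (hp1 : p < 1) (c : ℝ) :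
    ∀ᶠ b in 𝓝 0, c * b ≤ |b| ^ p := by
  have hlim : Tendsto (fun b : ℝ => |c| * |b| ^ (1 - p)) (𝓝 0) (𝓝 (|c| * |0| ^ (1 - p))) :=
    ((continuous_abs.rpow_const fun _ => Or.inr (by linarith)).const_mul _).tendsto 0
  rw [abs_zero, Real.zero_rpow (by linarith), mul_zero] at hlim
  filter_upwards [hlim.eventually_lt_const one_pos] with b hb
  have hsplit : |b| = |b| ^ (1 - p) * |b| ^ p := by
    rw [← Real.rpow_add' (abs_nonneg b) (by simp)]; simp
  calc c * b ≤ |c| * |b| := by rw [← abs_mul]; exact le_abs_self _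
    _ = (|c| * |b| ^ (1 - p)) * |b| ^ p := by nth_rw 1 [hsplit]; ring
    _ ≤ 1 * |b| ^ p := by gcongr
    _ = |b| ^ p := one_mul _

lemma eventually_mul_sign_mul_sub_le_abs_rpow_sub {p a : ℝ} (hp0 : 0 < p) (hp1 : p < 1)
    (ha : a ≠ 0) :
    ∀ᶠ b in 𝓝 a, p * |a| ^ (p - 1) * Real.sign a * (b - a)
      ≤ |b| ^ p - |a| ^ p + (1 - p) * |a| ^ (p - 2) * (b - a) ^ 2 := by
  have hsame : ∀ᶠ b in 𝓝 a, 0 < a * b := by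
    have : Tendsto (fun b => a * b) (𝓝 a) (𝓝 (a * a)) := (continuous_const_mul a).tendsto a
    exact this.eventually_const_lt (mul_self_pos.mpr ha)
  filter_upwards [hsame] with b hab
  have h := mul_rpow_sub_one_mul_sub_le hp0.le hp1.le (abs_pos.mpr ha)
    (abs_pos.mpr (right_ne_zero_of_mul hab.ne'))
  rcases ha.lt_or_gt with hneg | hpos
  · have hb : b < 0 := neg_of_mul_pos_right hab hneg.le
    rw [abs_of_neg hneg, abs_of_neg hb] at h ⊢
    rw [Real.sign_of_neg hneg]
    calc p * (-a) ^ (p - 1) * -1 * (b - a) = p * (-a) ^ (p - 1) * (-b - -a) := by ring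
      _ ≤ (-b) ^ p - (-a) ^ p + (1 - p) * (-a) ^ (p - 2) * (-b - -a) ^ 2 := h
      _ = (-b) ^ p - (-a) ^ p + (1 - p) * (-a) ^ (p - 2) * (b - a) ^ 2 := by ring
  · have hb : 0 < b := pos_of_mul_pos_right hab hpos.le
    rw [abs_of_pos hpos, abs_of_pos hb] at h ⊢
    rw [Real.sign_of_pos hpos, mul_one]
    exact h

lemma exists_eventually_mul_sub_le_abs_rpow_sub {p a c : ℝ} (hp0 : 0 < p) (hp1 : p < 1)
    (hc : a ≠ 0 → c = p * |a| ^ (p - 1) * Real.sign a) :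
    ∃ C, 0 ≤ C ∧ ∀ᶠ b in 𝓝 a, c * (b - a) ≤ |b| ^ p - |a| ^ p + C * (b - a) ^ 2 := by
  by_cases ha : a = 0
  · subst ha
    refine ⟨0, le_rfl, ?_⟩
    simpa [Real.zero_rpow hp0.ne'] using eventually_mul_le_abs_rpow hp1 c
  · refine ⟨(1 - p) * |a| ^ (p - 2), by have := abs_pos.mpr ha; positivity, ?_⟩
    rw [hc ha]
    exact eventually_mul_sign_mul_sub_le_abs_rpow_sub hp0 hp1 ha

theorem frechet_normal_cone_boundary_lp_ball_general (n : ℕ) (p r : ℝ)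
    (hp0 : 0 < p) (hp1 : p < 1)
    (xbar : EuclideanSpace ℝ (Fin n)) (hxbar : ∑ i, |xbar i| ^ p = r)
    (η : EuclideanSpace ℝ (Fin n))
    (hη : ∀ i, xbar i ≠ 0 → η i = p * |xbar i| ^ (p - 1) * Real.sign (xbar i)) :
    η ∈ frechetNormalCone {x : EuclideanSpace ℝ (Fin n) | ∑ i, |x i| ^ p ≤ r} xbar := by
  choose C hC0 hC using fun i => exists_eventually_mul_sub_le_abs_rpow_sub hp0 hp1 (hη i)
  set K := ∑ i, C i
  have hcoord : ∀ᶠ x in 𝓝 xbar, ∀ i,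
      η i * (x i - xbar i) ≤ |x i| ^ p - |xbar i| ^ p + C i * (x i - xbar i) ^ 2 :=
    eventually_all.2 fun i => ((PiLp.continuous_apply 2 _ i).tendsto xbar).eventually (hC i)
  refine mem_frechetNormalCone_of_eventually_inner_le_mul_norm_sq (C := K) ?_
  filter_upwards [nhdsWithin_le_nhds hcoord, self_mem_nhdsWithin] with x hx hxX
  calc inner ℝ η (x - xbar) = ∑ i, η i * (x i - xbar i) := by
        simp [PiLp.inner_apply, mul_comm]
    _ ≤ ∑ i, (|x i| ^ p - |xbar i| ^ p + K * (x i - xbar i) ^ 2) :=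
        sum_le_sum fun i _ => (hx i).trans <| by
          gcongr; exact single_le_sum (fun j _ => hC0 j) (mem_univ i)
    _ = (∑ i, |x i| ^ p - r) + K * ‖x - xbar‖ ^ 2 := by
        rw [sum_add_distrib, sum_sub_distrib, ← mul_sum, hxbar, EuclideanSpace.norm_sq_eq]
        simp
    _ ≤ K * ‖x - xbar‖ ^ 2 := by linarith [show ∑ i, |x i| ^ p ≤ r from hxX]

theorem frechet_normal_cone_boundary_lp_ball (n : ℕ) (p r : ℝ)
    (hp0 : 0 < p) (hp1 : p < 1) (hr : 0 < r)
    (xbar : EuclideanSpace ℝ (Fin n)) (hxbar : ∑ i, |xbar i| ^ p = r)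
    (η : EuclideanSpace ℝ (Fin n))
    (hη : ∀ i, xbar i ≠ 0 → η i = p * |xbar i| ^ (p - 1) * Real.sign (xbar i)) :
    η ∈ frechetNormalCone {x : EuclideanSpace ℝ (Fin n) | ∑ i, |x i| ^ p ≤ r} xbar :=
  frechet_normal_cone_boundary_lp_ball_general n p r hp0 hp1 xbar hxbar η hη
end

section
/- Fixed point implies stationarity (boundary case): let p ∈ (0,1), r > 0, β > 0, f differentiable, and x ∈ ℝⁿ with ‖x‖_p^p = r. Suppose x minimizes φ(y) = f(x) + ⟨∇f(x), y − x⟩ + (β/2)‖y − x‖² over the set {y : ∑_{i∈I(x)} |xᵢ|^(p-1)|yᵢ| ≤ r/p + ((p−1)/p)r_x, yᵢ = 0 for i ∈ A(x)} (where r_x = ‖x‖_p^p), i.e., x is a fixed point of subproblem (𝒫₁). Then there exists λ ≥ 0 such that ∇ᵢf(x) + λ p |xᵢ|^(p−1) sgn(xᵢ) = 0 for all i ∈ I(x). -/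
open Finset
open scoped RealInnerProductSpace

/-
Since the feasible set of the subproblem is convex and the quadratic term of the model is flat at
`x`, a fixed point `x` also minimizes the linear functional `⟪∇f(x), ·⟫` over it. Put
`wᵢ = |xᵢ|^(p-1) |xᵢ| = |xᵢ|^p` and `cᵢ = -∇ᵢf(x) xᵢ / wᵢ` for `i ∈ I(x)`, so that `∑ wᵢ = r` and
`⟪∇f(x), x⟫ = -∑ wᵢ cᵢ`. Comparing `x` with the vertices `(r / wⱼ) xⱼ eⱼ` of the weighted ℓ₁ ball
gives `r cⱼ ≤ ∑ wᵢ cᵢ` for every `j`, so no `cⱼ` exceeds the weighted mean of the `cᵢ`: all of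
them equal a common value `M`, which is nonnegative by comparison with `0`. Then `λ = M / p`.
-/

theorem Real.abs_eq_sign_mul (r : ℝ) : |r| = Real.sign r * r := by
  rcases lt_trichotomy r 0 with h | rfl | h
  · rw [abs_of_neg h, Real.sign_of_neg h, neg_one_mul]
  · simp
  · rw [abs_of_pos h, Real.sign_of_pos h, one_mul]

theorem exists_nonneg_forall_eq_of_forall_mul_sum_le {ι : Type*} {s : Finset ι} {w c : ι → ℝ}
    (hw : ∀ i ∈ s, 0 < w i) (hle : ∀ j ∈ s, c j * ∑ i ∈ s, w i ≤ ∑ i ∈ s, w i * c i)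
    (hnonneg : 0 ≤ ∑ i ∈ s, w i * c i) : ∃ M, 0 ≤ M ∧ ∀ i ∈ s, c i = M := by
  rcases s.eq_empty_or_nonempty with rfl | hs
  · exact ⟨0, le_rfl, by simp⟩
  obtain ⟨j, hj, hmax⟩ := s.exists_max_image c hs
  have hgap : ∀ i ∈ s, 0 ≤ w i * (c j - c i) := fun i hi =>
    mul_nonneg (hw i hi).le (sub_nonneg.2 (hmax i hi))
  have hzero : ∑ i ∈ s, w i * (c j - c i) = 0 := by
    refine le_antisymm ?_ (sum_nonneg hgap)
    simpa [mul_sub, sum_sub_distrib, ← sum_mul, mul_comm] using hle j hj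
  have hconst : ∀ i ∈ s, c i = c j := fun i hi =>
    (sub_eq_zero.1 ((mul_eq_zero.1 ((sum_eq_zero_iff_of_nonneg hgap).1 hzero i hi)).resolve_left
      (hw i hi).ne')).symm
  refine ⟨c j, ?_, hconst⟩
  rw [sum_congr rfl fun i hi => by rw [hconst i hi], ← sum_mul] at hnonneg
  exact nonneg_of_mul_nonneg_right hnonneg (sum_pos hw hs)

theorem isMinOn_inner_of_isMinOn_quadratic {E : Type*} [NormedAddCommGroup E]
    [InnerProductSpace ℝ E] {S : Set E} {x g : E} {c β : ℝ} (hS : StarConvex ℝ x S)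
    (hmin : IsMinOn (fun y => c + ⟪g, y - x⟫ + β / 2 * ‖y - x‖ ^ 2) S x) :
    IsMinOn (inner ℝ g) S x := by
  have hquad := (((hasFDerivAt_id x).sub_const x).norm_sq).const_mul (β / 2)
  have hlin := ((innerSL ℝ g).hasFDerivAt (x := x)).sub_const ⟪g, x⟫
  have hderiv := (hlin.const_add c).add hquad
  simp only [id, sub_self, map_zero, ContinuousLinearMap.zero_comp, smul_zero, add_zero] at hderiv
  have hfun : (fun y => c + ⟪g, y - x⟫ + β / 2 * ‖y - x‖ ^ 2) =
      (fun y => c + (innerSL ℝ g y - ⟪g, x⟫)) + fun y => β / 2 * ‖y - x‖ ^ 2 := by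
    funext y
    simp [inner_sub_right]
  rw [hfun] at hmin
  refine isMinOn_iff.2 fun y hy => sub_nonneg.1 ?_
  simpa [inner_sub_right] using hmin.localize.hasFDerivWithinAt_nonneg hderiv.hasFDerivWithinAt
    (sub_mem_posTangentConeAt_of_segment_subset (hS.segment_subset hy))

section

variable {ι : Type*} [Fintype ι]

theorem sum_abs_rpow_sub_one_mul_abs (v : ι → ℝ) {p : ℝ} (hp : p ≠ 0) :
    ∑ i ∈ univ.filter (fun i => v i ≠ 0), |v i| ^ (p - 1) * |v i| = ∑ i, |v i| ^ p := by
  refine (sum_congr rfl fun i hi => ?_).trans (sum_filter_of_ne fun i _ h hvi => h ?_)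
  · have hvi : |v i| ≠ 0 := abs_ne_zero.2 (mem_filter.1 hi).2
    rw [Real.rpow_sub_one hvi, div_mul_cancel₀ _ hvi]
  · rw [hvi, abs_zero, Real.zero_rpow hp]

def weightedL1BallOnSupport (x : EuclideanSpace ℝ ι) (a : ι → ℝ) (R : ℝ) :
    Set (EuclideanSpace ℝ ι) :=
  {y | ∑ i ∈ univ.filter (fun i => x i ≠ 0), a i * |y i| ≤ R ∧ ∀ i, x i = 0 → y i = 0}

theorem convex_weightedL1BallOnSupport (x : EuclideanSpace ℝ ι) {a : ι → ℝ} (ha : ∀ i, 0 ≤ a i)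
    (R : ℝ) : Convex ℝ (weightedL1BallOnSupport x a R) := by
  intro y hy z hz s t hs ht hst
  refine ⟨?_, fun i hi => by simp [hy.2 i hi, hz.2 i hi]⟩
  calc ∑ i ∈ univ.filter (fun i => x i ≠ 0), a i * |(s • y + t • z) i|
      ≤ ∑ i ∈ univ.filter (fun i => x i ≠ 0), (s * (a i * |y i|) + t * (a i * |z i|)) := by
        refine sum_le_sum fun i _ => ?_
        have hconv : |s * y i + t * z i| ≤ s * |y i| + t * |z i| := by
          simpa [abs_mul, abs_of_nonneg hs, abs_of_nonneg ht] using abs_add_le (s * y i) (t * z i)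
        simpa [mul_add, mul_left_comm] using mul_le_mul_of_nonneg_left hconv (ha i)
    _ ≤ s * R + t * R := by
        rw [sum_add_distrib, ← mul_sum, ← mul_sum]
        gcongr
        exacts [hy.1, hz.1]
    _ = R := by rw [← add_mul, hst, one_mul]

theorem exists_multiplier_of_isMinOn_inner {x g : EuclideanSpace ℝ ι} {a : ι → ℝ} {R : ℝ}
    (ha : ∀ i, x i ≠ 0 → 0 < a i)
    (hxR : ∑ i ∈ univ.filter (fun i => x i ≠ 0), a i * |x i| = R)
    (hmin : IsMinOn (inner ℝ g) (weightedL1BallOnSupport x a R) x) :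
    ∃ M, 0 ≤ M ∧ ∀ i, x i ≠ 0 → g i = -(M * a i * Real.sign (x i)) := by
  classical
  rw [isMinOn_iff] at hmin
  set I := univ.filter (fun i => x i ≠ 0)
  set w : ι → ℝ := fun i => a i * |x i|
  set c : ι → ℝ := fun i => -(g i * x i) / w i
  have hw : ∀ i ∈ I, 0 < w i := fun i hi =>
    mul_pos (ha i (mem_filter.1 hi).2) (abs_pos.2 (mem_filter.1 hi).2)
  have hR : 0 ≤ R := hxR ▸ sum_nonneg fun i hi => (hw i hi).le
  have hgx : ⟪g, x⟫ = -∑ i ∈ I, w i * c i := calc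
    ⟪g, x⟫ = ∑ i, g i * x i := by simp [PiLp.inner_apply, mul_comm]
    _ = ∑ i ∈ I, g i * x i := (sum_filter_of_ne fun _ _ => right_ne_zero_of_mul).symm
    _ = -∑ i ∈ I, w i * c i := by
      rw [← sum_neg_distrib]
      exact sum_congr rfl fun i hi => by simp only [c]; field_simp [(hw i hi).ne']
  have hvertex : ∀ j ∈ I,
      EuclideanSpace.single j (R / w j * x j) ∈ weightedL1BallOnSupport x a R := by
    intro j hj
    refine ⟨le_of_eq ?_, fun i hi => ?_⟩
    · rw [sum_eq_single_of_mem j hj fun i _ hij => by simp [hij]]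
      rw [PiLp.single_apply, if_pos rfl, abs_mul, abs_of_nonneg (div_nonneg hR (hw j hj).le),
        mul_left_comm]
      exact div_mul_cancel₀ R (hw j hj).ne'
    · have hij : i ≠ j := fun h => (mem_filter.1 hj).2 (h ▸ hi)
      simp [hij]
  have hle : ∀ j ∈ I, c j * ∑ i ∈ I, w i ≤ ∑ i ∈ I, w i * c i := by
    intro j hj
    have hxy := hmin _ (hvertex j hj)
    have hvalue : R / w j * x j * g j = -(c j * R) := by
      simp only [c]
      field_simp [(hw j hj).ne']
    rw [hgx, EuclideanSpace.inner_single_right, conj_trivial, hvalue, ← hxR] at hxy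
    linarith
  have hnonneg : 0 ≤ ∑ i ∈ I, w i * c i := by
    have hx0 := hmin 0 (by simpa [weightedL1BallOnSupport] using hR)
    rw [inner_zero_right] at hx0
    linarith
  obtain ⟨M, hM, hcM⟩ := exists_nonneg_forall_eq_of_forall_mul_sum_le hw hle hnonneg
  refine ⟨M, hM, fun i hi => ?_⟩
  have hsign : Real.sign (x i) ≠ 0 := fun h => hi (Real.sign_eq_zero_iff.1 h)
  rw [← hcM i (mem_filter.2 ⟨mem_univ i, hi⟩)]
  simp only [c, w]
  rw [Real.abs_eq_sign_mul]
  field_simp [(ha i hi).ne']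

end

theorem fixed_point_stationary_boundary_general (n : ℕ) (p r β : ℝ)
    (hp0 : 0 < p)
    (f : EuclideanSpace ℝ (Fin n) → ℝ)
    (x : EuclideanSpace ℝ (Fin n)) (hx : ∑ i, |x i| ^ p = r)
    (S : Set (EuclideanSpace ℝ (Fin n)))
    (hS : S = {y | (∑ i ∈ Finset.univ.filter (fun i => x i ≠ 0), |x i| ^ (p - 1) * |y i|
        ≤ r / p + ((p - 1) / p) * r) ∧ ∀ i, x i = 0 → y i = 0})
    (hmin : ∀ y ∈ S,
      f x + (inner ℝ (gradient f x) (x - x) : ℝ) + β / 2 * ‖x - x‖ ^ 2 ≤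
        f x + (inner ℝ (gradient f x) (y - x) : ℝ) + β / 2 * ‖y - x‖ ^ 2) :
    ∃ lam : ℝ, 0 ≤ lam ∧ ∀ i, x i ≠ 0 →
      gradient f x i + lam * p * |x i| ^ (p - 1) * Real.sign (x i) = 0 := by
  have hradius : r / p + ((p - 1) / p) * r = r := by
    field_simp
    ring
  have hxr : ∑ i ∈ univ.filter (fun i => x i ≠ 0), |x i| ^ (p - 1) * |x i| = r :=
    (sum_abs_rpow_sub_one_mul_abs _ hp0.ne').trans hx
  rw [hradius] at hS
  change S = weightedL1BallOnSupport x (fun i => |x i| ^ (p - 1)) r at hS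
  subst hS
  have hconvex := convex_weightedL1BallOnSupport x (a := fun i => |x i| ^ (p - 1))
    (fun i => Real.rpow_nonneg (abs_nonneg _) _) r
  have hlin := isMinOn_inner_of_isMinOn_quadratic (hconvex.starConvex ⟨hxr.le, fun _ h => h⟩)
    (isMinOn_iff.2 hmin)
  obtain ⟨M, hM, hgrad⟩ :=
    exists_multiplier_of_isMinOn_inner (fun i hi => Real.rpow_pos_of_pos (abs_pos.2 hi) _) hxr hlin
  refine ⟨M / p, div_nonneg hM hp0.le, fun i hi => ?_⟩
  rw [hgrad i hi]
  field_simp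
  ring

theorem fixed_point_stationary_boundary (n : ℕ) (p r β : ℝ)
    (hp0 : 0 < p) (hp1 : p < 1) (hr : 0 < r) (hβ : 0 < β)
    (f : EuclideanSpace ℝ (Fin n) → ℝ) (hf : Differentiable ℝ f)
    (x : EuclideanSpace ℝ (Fin n)) (hx : ∑ i, |x i| ^ p = r)
    (S : Set (EuclideanSpace ℝ (Fin n)))
    (hS : S = {y | (∑ i ∈ Finset.univ.filter (fun i => x i ≠ 0), |x i| ^ (p - 1) * |y i|
        ≤ r / p + ((p - 1) / p) * r) ∧ ∀ i, x i = 0 → y i = 0})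
    (hmin : ∀ y ∈ S,
      f x + (inner ℝ (gradient f x) (x - x) : ℝ) + β / 2 * ‖x - x‖ ^ 2 ≤
        f x + (inner ℝ (gradient f x) (y - x) : ℝ) + β / 2 * ‖y - x‖ ^ 2) :
    ∃ lam : ℝ, 0 ≤ lam ∧ ∀ i, x i ≠ 0 →
      gradient f x i + lam * p * |x i| ^ (p - 1) * Real.sign (x i) = 0 :=
  fixed_point_stationary_boundary_general n p r β hp0 f x hx S hS hmin
end

section
/- Fixed point implies stationarity (interior case): let p ∈ (0,1), c ∈ (0,1), r > 0, β > 0, f differentiable, and x with ‖x‖_p^p < r. With ε, r' defined as in the algorithm (ε = c((r−‖x‖_p^p)/(|A(x)|+1))^(1/p), r' = (1/p)(r + (p−1)‖x‖_p^p − |A(x)|ε^p)), suppose x minimizes φ(y) = f(x) + ⟨∇f(x), y−x⟩ + (β/2)‖y−x‖² over {y : ∑_{i∈I(x)}|xᵢ|^(p−1)|yᵢ| + ∑_{i∈A(x)} ε^(p−1)|yᵢ| ≤ r'}. Then ∇f(x) = 0. -/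
/-!
Since `ε^p = c^p (r - ‖x‖_p^p) / (A + 1)` and `c < 1`, we get `A ε^p < r - ‖x‖_p^p`, i.e.
`‖x‖_p^p < r'`. The weighted `ℓ¹` constraint evaluated at `x` is exactly `‖x‖_p^p`
(`|xᵢ|^(p-1) |xᵢ| = |xᵢ|^p`, and zero coordinates contribute nothing), so `x` lies in the
interior of the feasible set. A constrained minimizer of the model
`φ(y) = f x + ⟪∇f(x), y - x⟫ + β/2 ‖y - x‖²` is therefore a local minimizer, and Fermat's rule
gives `∇φ(x) = ∇f(x) = 0`.
-/

open Finset Topology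

theorem eq_zero_of_isLocalMin_add_inner_add_sq {E : Type*} [NormedAddCommGroup E]
    [InnerProductSpace ℝ E] {a β : ℝ} {g x : E}
    (h : IsLocalMin (fun y => a + inner ℝ g (y - x) + β / 2 * ‖y - x‖ ^ 2) x) : g = 0 := by
  have hsub : HasFDerivAt (fun y : E => y - x) (ContinuousLinearMap.id ℝ E) x :=
    (hasFDerivAt_id x).sub_const x
  have hcrit := h.hasFDerivAt_eq_zero ((((innerSL ℝ g).hasFDerivAt.comp x hsub).const_add a).add
    (hsub.norm_sq.const_mul (β / 2)))
  simpa using congrArg (fun L => L g) hcrit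

theorem abs_rpow_sub_one_mul_abs {p : ℝ} (hp : p ≠ 0) (a : ℝ) :
    |a| ^ (p - 1) * |a| = |a| ^ p := by
  rcases eq_or_ne a 0 with rfl | ha
  · simp [Real.zero_rpow hp]
  · rw [← Real.rpow_add_one (abs_ne_zero.mpr ha), sub_add_cancel]

theorem sum_filter_ne_rpow_sub_one_mul_abs_add_sum_filter_eq {ι : Type*} [Fintype ι] {p : ℝ}
    (hp : p ≠ 0) (x : ι → ℝ) (w : ℝ) :
    ∑ i ∈ univ.filter (fun i => x i ≠ 0), |x i| ^ (p - 1) * |x i|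
      + ∑ i ∈ univ.filter (fun i => x i = 0), w * |x i| = ∑ i, |x i| ^ p := by
  have hzero : ∑ i ∈ univ.filter (fun i => x i = 0), w * |x i| = 0 :=
    sum_eq_zero fun i hi => by simp [(mem_filter.mp hi).2]
  rw [hzero, add_zero]
  simp_rw [abs_rpow_sub_one_mul_abs hp]
  exact sum_filter_of_ne fun i _ hi => by
    contrapose! hi
    simp [hi, Real.zero_rpow hp]

theorem mul_rpow_one_div_rpow {c s p : ℝ} (hc : 0 ≤ c) (hs : 0 ≤ s) (hp : p ≠ 0) :
    (c * s ^ (1 / p)) ^ p = c ^ p * s := by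
  rw [Real.mul_rpow hc (Real.rpow_nonneg hs _), one_div, Real.rpow_inv_rpow hs hp]

theorem lt_linearized_radius {p c r T : ℝ} (A : ℕ) (hp : 0 < p) (hc0 : 0 ≤ c) (hc1 : c < 1)
    (hT : T < r) :
    T < 1 / p * (r + (p - 1) * T - A * (c * ((r - T) / (A + 1)) ^ (1 / p)) ^ p) := by
  have hs : 0 < (r - T) / (A + 1) := div_pos (sub_pos.mpr hT) (by positivity)
  have hcp : c ^ p ≤ 1 := Real.rpow_le_one hc0 hc1.le hp.le
  have hA : A * (c ^ p * ((r - T) / (A + 1))) < r - T := calc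
    A * (c ^ p * ((r - T) / (A + 1))) ≤ A * ((r - T) / (A + 1)) := by
      gcongr
      exact mul_le_of_le_one_left hs.le hcp
    _ < (A + 1) * ((r - T) / (A + 1)) := by gcongr; linarith
    _ = r - T := mul_div_cancel₀ _ (by positivity)
  rw [mul_rpow_one_div_rpow hc0 hs.le hp.ne', one_div_mul_eq_div, lt_div_iff₀ hp]
  linarith

theorem fixed_point_stationary_interior_general (n : ℕ) (p r c β : ℝ)
    (hp0 : 0 < p) (hc0 : 0 < c) (hc1 : c < 1)
    (f : EuclideanSpace ℝ (Fin n) → ℝ)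
    (x : EuclideanSpace ℝ (Fin n)) (hx : ∑ i, |x i| ^ p < r)
    (A : ℕ)
    (ε : ℝ) (hε : ε = c * ((r - ∑ i, |x i| ^ p) / (A + 1)) ^ (1 / p))
    (r' : ℝ) (hr' : r' = (1 / p) * (r + (p - 1) * (∑ i, |x i| ^ p) - A * ε ^ p))
    (S : Set (EuclideanSpace ℝ (Fin n)))
    (hS : S = {y | ∑ i ∈ Finset.univ.filter (fun i => x i ≠ 0), |x i| ^ (p - 1) * |y i|
        + ∑ i ∈ Finset.univ.filter (fun i => x i = 0), ε ^ (p - 1) * |y i| ≤ r'})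
    (hmin : ∀ y ∈ S,
      f x + (inner ℝ (gradient f x) (x - x) : ℝ) + β / 2 * ‖x - x‖ ^ 2 ≤
        f x + (inner ℝ (gradient f x) (y - x) : ℝ) + β / 2 * ‖y - x‖ ^ 2) :
    gradient f x = 0 := by
  have hxS : S ∈ 𝓝 x := by
    subst hS
    refine ((Continuous.continuousAt (by fun_prop)).eventually_lt continuousAt_const ?_).mono
      fun y hy => hy.le
    rw [sum_filter_ne_rpow_sub_one_mul_abs_add_sum_filter_eq hp0.ne', hr', hε]
    exact lt_linearized_radius A hp0 hc0.le hc1 hx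
  exact eq_zero_of_isLocalMin_add_inner_add_sq (IsMinOn.isLocalMin hmin hxS)

theorem fixed_point_stationary_interior (n : ℕ) (p r c β : ℝ)
    (hp0 : 0 < p) (hp1 : p < 1) (hr : 0 < r) (hc0 : 0 < c) (hc1 : c < 1) (hβ : 0 < β)
    (f : EuclideanSpace ℝ (Fin n) → ℝ) (hf : Differentiable ℝ f)
    (x : EuclideanSpace ℝ (Fin n)) (hx : ∑ i, |x i| ^ p < r)
    (A : ℕ) (hA : A = (Finset.univ.filter (fun i => x i = 0)).card)
    (ε : ℝ) (hε : ε = c * ((r - ∑ i, |x i| ^ p) / (A + 1)) ^ (1 / p))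
    (r' : ℝ) (hr' : r' = (1 / p) * (r + (p - 1) * (∑ i, |x i| ^ p) - A * ε ^ p))
    (S : Set (EuclideanSpace ℝ (Fin n)))
    (hS : S = {y | ∑ i ∈ Finset.univ.filter (fun i => x i ≠ 0), |x i| ^ (p - 1) * |y i|
        + ∑ i ∈ Finset.univ.filter (fun i => x i = 0), ε ^ (p - 1) * |y i| ≤ r'})
    (hmin : ∀ y ∈ S,
      f x + (inner ℝ (gradient f x) (x - x) : ℝ) + β / 2 * ‖x - x‖ ^ 2 ≤
        f x + (inner ℝ (gradient f x) (y - x) : ℝ) + β / 2 * ‖y - x‖ ^ 2) :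
    gradient f x = 0 :=
  fixed_point_stationary_interior_general n p r c β hp0 hc0 hc1 f x hx A ε hε r' hr' S hS hmin
end
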